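/- Let φ: ℙ¹ → ℙ¹ be a rational map of degree d ≥ 2 defined over a number field K, and let f₀, f₁ ∈ K[x₀,x₁] be a homogeneous presentation of φ of degree d in which at least one coefficient equals 1. Then the homogeneous resultant D = Res(f₀,f₁) satisfies h(D) ≤ (2d+2)·h(φ) + C·d·log d for an absolute constant C > 0. -/

import Mathlib

open NumberField IsDedekindDomain Polynomial

/-- The places of a number field `K`: infinite (archimedean) places and
finite places (nonzero prime ideals of the ring of integers). -/
abbrev NFPlace (K : Type) [Field K] [NumberField K] : Type :=
  NumberField.InfinitePlace K ⊕ IsDedekindDomain.HeightOneSpectrum (𝓞 K)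

open scoped Classical in
/-- The normalized absolute value attached to a place of `K`: the archimedean absolute
value for infinite places, and `(N v)^{-ord_v(x)}` for a finite place `v`. -/
noncomputable def placeAbs (K : Type) [Field K] [NumberField K] : NFPlace K → K → ℝ
  | Sum.inl w, x => w x
  | Sum.inr v, x =>
      if hx : x = 0 then 0
      else (Ideal.absNorm v.asIdeal : ℝ) ^
        (Multiplicative.toAdd (WithZero.unzero (((v.valuation K).ne_zero_iff).mpr hx)))

/-- The weight of a place, chosen so that `placeWeight v * log (placeAbs v x)` equals
`N_v log |x|_v` in the standard normalization (for which the product formula holds). -/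
noncomputable def placeWeight (K : Type) [Field K] [NumberField K] : NFPlace K → ℝ
  | Sum.inl w => (w.mult : ℝ) / (Module.finrank ℚ K : ℝ)
  | Sum.inr _ => 1 / (Module.finrank ℚ K : ℝ)

/-- A place is archimedean iff it is an infinite place. -/
def NFPlace.IsArch {K : Type} [Field K] [NumberField K] (v : NFPlace K) : Prop := v.isLeft

/-- The absolute logarithmic Weil height of an element of a number field. -/
noncomputable def heightK (K : Type) [Field K] [NumberField K] (x : K) : ℝ :=
  ∑ᶠ v : NFPlace K, placeWeight K v * max 0 (Real.log (placeAbs K v x))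

/-- The absolute logarithmic Weil height of a point of `ℙ¹(K)`. -/
noncomputable def heightP1 (K : Type) [Field K] [NumberField K]
    (x : Projectivization K (Fin 2 → K)) : ℝ :=
  ∑ᶠ v : NFPlace K, placeWeight K v *
    Real.log (max (placeAbs K v (x.rep 0)) (placeAbs K v (x.rep 1)))

/-- Evaluation of the binary form of degree `d` with coefficients `c`:
`∑ i, c i * x₀^i * x₁^(d-i)`. -/
def evalForm {R : Type} [CommRing R] (d : ℕ) (c : Fin (d+1) → R) (x : Fin 2 → R) : R :=
  ∑ i : Fin (d+1), c i * x 0 ^ (i : ℕ) * x 1 ^ (d - (i : ℕ))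

/-- A rational self-map of ℙ¹ of (exact) degree `d`, presented by a pair of homogeneous
degree-`d` binary forms with no common projective zero over any field extension
(equivalently, over an algebraic closure). -/
structure RatMap (K : Type) [Field K] (d : ℕ) where
  a : Fin (d+1) → K
  b : Fin (d+1) → K
  nondeg : ∀ (L : Type) [Field L] [Algebra K L] (x : Fin 2 → L),
    evalForm d (fun i => algebraMap K L (a i)) x = 0 →
    evalForm d (fun i => algebraMap K L (b i)) x = 0 → x = 0

namespace RatMap

variable {K : Type} [Field K] {d : ℕ}

/-- The induced self-map of `ℙ¹(L)` for any field extension `L` of `K`. -/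
noncomputable def mapP (φ : RatMap K d) (L : Type) [Field L] [Algebra K L]
    (x : Projectivization L (Fin 2 → L)) : Projectivization L (Fin 2 → L) :=
  Projectivization.mk L
    ![evalForm d (fun i => algebraMap K L (φ.a i)) x.rep,
      evalForm d (fun i => algebraMap K L (φ.b i)) x.rep]
    (by
      intro h
      have h0 := congrFun h 0
      have h1 := congrFun h 1
      simp only [Matrix.cons_val_zero, Matrix.cons_val_one, Matrix.head_cons,
        Pi.zero_apply] at h0 h1
      exact x.rep_nonzero (φ.nondeg L x.rep h0 h1))

/-- The induced self-map of `ℙ¹(K)`. -/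
noncomputable def toFun (φ : RatMap K d) :
    Projectivization K (Fin 2 → K) → Projectivization K (Fin 2 → K) :=
  φ.mapP K

/-- The height `h(φ)` of a rational map: the Weil height of its coefficient point
in `ℙ^{2d+1}`. -/
noncomputable def height [NumberField K] (φ : RatMap K d) : ℝ :=
  ∑ᶠ v : NFPlace K, placeWeight K v *
    Real.log ((Finset.univ.sup (fun i : Fin (d+1) ⊕ Fin (d+1) =>
      Real.toNNReal (placeAbs K v (Sum.elim φ.a φ.b i))) : NNReal) : ℝ)

end RatMap

/-- The natural inclusion `ℙ¹(K) → ℙ¹(L)` for a field extension `L/K`. -/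
noncomputable def P1Map (K : Type) [Field K] (L : Type) [Field L] [Algebra K L]
    (x : Projectivization K (Fin 2 → K)) : Projectivization L (Fin 2 → L) :=
  Projectivization.mk L (fun i => algebraMap K L (x.rep i))
    (by
      intro h
      apply x.rep_nonzero
      funext i
      have := congrFun h i
      simpa using this)

/-- The canonical height of a point of `ℙ¹(L)` for a number field `L ⊇ K`,
`ĥ_φ(x) = lim_n h(φⁿ(x))/dⁿ`. -/
noncomputable def canHeightAt {K : Type} [Field K] {d : ℕ} (φ : RatMap K d)
    (L : Type) [Field L] [NumberField L] [Algebra K L]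
    (x : Projectivization L (Fin 2 → L)) : ℝ :=
  Filter.limUnder Filter.atTop (fun n : ℕ => heightP1 L ((φ.mapP L)^[n] x) / (d : ℝ) ^ n)

/-- The canonical height `ĥ_φ` on `ℙ¹(K)`. -/
noncomputable def canHeight {K : Type} [Field K] [NumberField K] {d : ℕ} (φ : RatMap K d)
    (x : Projectivization K (Fin 2 → K)) : ℝ :=
  canHeightAt φ K x

/-- `α` is not preperiodic for `φ`: its forward orbit is infinite. -/
def NonPreperiodic {K : Type} [Field K] {d : ℕ} (φ : RatMap K d)
    (α : Projectivization K (Fin 2 → K)) : Prop :=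
  (Set.range fun n : ℕ => (φ.toFun)^[n] α).Infinite

/-- `β` is not exceptional for `φ`: the number of `n`-th preimages of `β` in `ℙ¹(K̄)`
tends to infinity with `n`. -/
def NonExceptional {K : Type} [Field K] [NumberField K] {d : ℕ} (φ : RatMap K d)
    (β : Projectivization K (Fin 2 → K)) : Prop :=
  Filter.Tendsto
    (fun n : ℕ => Nat.card {x : Projectivization (AlgebraicClosure K) (Fin 2 → AlgebraicClosure K) //
      (φ.mapP (AlgebraicClosure K))^[n] x = P1Map K (AlgebraicClosure K) β})
    Filter.atTop Filter.atTop

/-- `S` contains all the archimedean places of `K`. -/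
def ContainsArch (K : Type) [Field K] [NumberField K] (S : Finset (NFPlace K)) : Prop :=
  ∀ w : NumberField.InfinitePlace K, Sum.inl w ∈ S

/-- `x` and `y` in `ℙ¹(K)` are `S`-integral relative to each other: at every finite place
outside `S` their reductions are distinct, i.e. the `v`-adic logarithmic chordal distance
vanishes: `|x₀y₁ - x₁y₀|_v = max(|x₀|_v,|x₁|_v) · max(|y₀|_v,|y₁|_v)`. -/
def SIntegralRel {K : Type} [Field K] [NumberField K] (S : Finset (NFPlace K))
    (x y : Projectivization K (Fin 2 → K)) : Prop :=
  ∀ v : IsDedekindDomain.HeightOneSpectrum (𝓞 K), (Sum.inr v : NFPlace K) ∉ S →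
    placeAbs K (Sum.inr v) (x.rep 0 * y.rep 1 - x.rep 1 * y.rep 0) =
      max (placeAbs K (Sum.inr v) (x.rep 0)) (placeAbs K (Sum.inr v) (x.rep 1)) *
      max (placeAbs K (Sum.inr v) (y.rep 0)) (placeAbs K (Sum.inr v) (y.rep 1))

/-- `log_d⁺ x = max(0, log x / log d)`. -/
noncomputable def logdPlus (d : ℕ) (x : ℝ) : ℝ := max 0 (Real.log x / Real.log d)

/-- The Sylvester matrix of the pair of degree-`d` binary forms with coefficient
vectors `a` and `b` (coefficients `c i` of `x₀^i x₁^{d-i}`). -/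
def sylvester {K : Type} [Field K] {d : ℕ} (a b : Fin (d+1) → K) :
    Matrix (Fin (2*d)) (Fin (2*d)) K :=
  Matrix.of fun i j =>
    if (i : ℕ) < d then
      if h : (i : ℕ) ≤ (j : ℕ) ∧ (j : ℕ) - (i : ℕ) ≤ d then
        a ⟨d - ((j : ℕ) - (i : ℕ)), by omega⟩ else 0
    else
      if h : (i : ℕ) - d ≤ (j : ℕ) ∧ (j : ℕ) - ((i : ℕ) - d) ≤ d then
        b ⟨d - ((j : ℕ) - ((i : ℕ) - d)), by omega⟩ else 0

/-- The homogeneous resultant of the pair of degree-`d` binary forms with coefficient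
vectors `a` and `b`, as the determinant of the Sylvester matrix. -/
noncomputable def resultantForms {K : Type} [Field K] {d : ℕ} (a b : Fin (d+1) → K) : K :=
  (sylvester a b).det

/-!
Every entry of the Sylvester matrix is `0` or a coefficient of `φ`, so at a place `v` with
`M_v = max_i |c_i|_v` Leibniz's formula gives `|Res|_v ≤ (2d)! M_v^{2d}`, and even
`|Res|_v ≤ M_v^{2d}` at a finite place by the ultrametric inequality. Since one coefficient is `1`,
`M_v ≥ 1`, so `log⁺ |Res|_v ≤ 2d log M_v + log (2d)!`, the last term occurring only at the
archimedean places, whose weights sum to `1`. Summing gives `h(Res) ≤ 2d h(φ) + log (2d)!`,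
and `log (2d)! ≤ 2d log (2d) ≤ 4d log d`.
-/

open Real Finset

theorem Matrix.det_le_of_isNonarchimedean {R S : Type*} [CommRing R] [Nontrivial R] [CommRing S]
    [LinearOrder S] [IsStrictOrderedRing S] {n : Type*} [Fintype n] [DecidableEq n]
    {abv : AbsoluteValue R S} (habv : IsNonarchimedean abv) {A : Matrix n n R} {x : S}
    (hx : ∀ i j, abv (A i j) ≤ x) : abv A.det ≤ x ^ Fintype.card n := by
  rw [Matrix.det_apply]
  obtain ⟨σ, -, hσ⟩ := habv.finset_image_add abv.map_zero abv.nonneg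
    (fun σ : Equiv.Perm n => Equiv.Perm.sign σ • ∏ i, A (σ i) i) univ
  calc _ ≤ abv (Equiv.Perm.sign σ • ∏ i, A (σ i) i) := hσ
    _ = ∏ i, abv (A (σ i) i) := by rw [abv.map_units_int_smul, abv.map_prod]
    _ ≤ ∏ _i : n, x := prod_le_prod (fun _ _ => abv.nonneg _) fun i _ => hx _ _
    _ = x ^ Fintype.card n := by rw [prod_const, Finset.card_univ]

theorem finsum_le_finsum_of_nonneg {α M : Type*} [AddCommMonoid M] [PartialOrder M]
    [IsOrderedAddMonoid M] {f g : α → M} (hf : 0 ≤ f) (hfg : f ≤ g)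
    (hg : g.HasFiniteSupport) : ∑ᶠ x, f x ≤ ∑ᶠ x, g x := by
  refine finsum_le_finsum' (Set.Finite.subset hg fun x hx hgx => hx ?_) hg hfg
  exact le_antisymm (hgx ▸ hfg x) (hf x)

theorem finsum_sumElim_zero {α β M : Type*} [Fintype α] [AddCommMonoid M] (f : α → M) :
    ∑ᶠ v : α ⊕ β, Sum.elim f 0 v = ∑ w, f w := by
  rw [finsum_eq_sum_of_support_subset (s := univ.map .inl), sum_map]
  · rfl
  · rintro (w | u) hu
    · simp
    · exact absurd rfl hu

open scoped Nat in
theorem log_factorial_two_mul_le {d : ℕ} (hd : 2 ≤ d) :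
    log (2 * d)! ≤ 4 * d * log d := by
  have hd0 : (0 : ℝ) < d := by positivity
  calc log (2 * d)! ≤ log (((2 * d : ℕ) : ℝ) ^ (2 * d)) :=
        log_le_log (by positivity) (mod_cast Nat.factorial_le_pow _)
    _ = 2 * d * (log 2 + log d) := by
        rw [log_pow]; push_cast; rw [log_mul two_ne_zero hd0.ne']
    _ ≤ 2 * d * (log d + log d) := by
        gcongr; exact mod_cast hd
    _ = 4 * d * log d := by ring

section MaxAbv

variable {R ι : Type*} [Semiring R] [Fintype ι]

/-- The `ℝ≥0`-valued sup in the shape in which it occurs in `RatMap.height`. -/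
noncomputable def maxAbv (abv : AbsoluteValue R ℝ) (c : ι → R) : NNReal :=
  univ.sup fun i => (abv (c i)).toNNReal

theorem maxAbv_le_iff {abv : AbsoluteValue R ℝ} {c : ι → R} {M : ℝ} (hM : 0 ≤ M) :
    (maxAbv abv c : ℝ) ≤ M ↔ ∀ i, abv (c i) ≤ M := by
  lift M to NNReal using hM
  simp [maxAbv, Real.toNNReal_le_iff_le_coe]

theorem le_maxAbv (abv : AbsoluteValue R ℝ) (c : ι → R) (i : ι) :
    abv (c i) ≤ maxAbv abv c :=
  (maxAbv_le_iff (NNReal.coe_nonneg _)).mp le_rfl i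

theorem one_le_maxAbv [Nontrivial R] (abv : AbsoluteValue R ℝ) {c : ι → R}
    (h1 : ∃ i, c i = 1) :
    1 ≤ (maxAbv abv c : ℝ) := by
  obtain ⟨i, hi⟩ := h1
  simpa [hi] using le_maxAbv abv c i

end MaxAbv

section Sylvester

open scoped Nat

variable {K : Type} [Field K] {d : ℕ}

theorem sylvester_apply_eq_zero_or (a b : Fin (d+1) → K) (i j : Fin (2*d)) :
    sylvester a b i j = 0 ∨ ∃ k, sylvester a b i j = Sum.elim a b k := by
  unfold _root_.sylvester
  simp only [Matrix.of_apply]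
  split_ifs
  exacts [.inr ⟨.inl _, rfl⟩, .inl rfl, .inr ⟨.inr _, rfl⟩, .inl rfl]

theorem abv_sylvester_le (abv : AbsoluteValue K ℝ) (a b : Fin (d+1) → K) (i j : Fin (2*d)) :
    abv (sylvester a b i j) ≤ maxAbv abv (Sum.elim a b) := by
  rcases sylvester_apply_eq_zero_or a b i j with h | ⟨k, h⟩
  · rw [h, abv.map_zero]; exact NNReal.coe_nonneg _
  · rw [h]; exact le_maxAbv abv _ k

theorem posLog_abv_resultantForms_le (abv : AbsoluteValue K ℝ) (a b : Fin (d+1) → K) :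
    log⁺ (abv (resultantForms a b)) ≤
      2 * d * log⁺ (maxAbv abv (Sum.elim a b)) + log (2 * d)! := by
  have hdet := Matrix.det_le (abv_sylvester_le abv a b)
  rw [Fintype.card_fin, nsmul_eq_mul] at hdet
  calc _ ≤ log⁺ ((2 * d)! * (maxAbv abv (Sum.elim a b) : ℝ) ^ (2 * d)) :=
        posLog_le_posLog (abv.nonneg _) hdet
    _ ≤ log⁺ (2 * d)! + log⁺ ((maxAbv abv (Sum.elim a b) : ℝ) ^ (2 * d)) := posLog_mul
    _ = _ := by
        have hfact : 1 ≤ |((2 * d)! : ℝ)| := by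
          rw [Nat.abs_cast, Nat.one_le_cast]; exact Nat.factorial_pos _
        rw [posLog_pow, posLog_eq_log hfact]
        push_cast; ring

theorem posLog_abv_resultantForms_le_of_isNonarchimedean {abv : AbsoluteValue K ℝ}
    (habv : IsNonarchimedean abv) (a b : Fin (d+1) → K) :
    log⁺ (abv (resultantForms a b)) ≤ 2 * d * log⁺ (maxAbv abv (Sum.elim a b)) := by
  have hdet := Matrix.det_le_of_isNonarchimedean habv (abv_sylvester_le abv a b)
  rw [Fintype.card_fin] at hdet
  calc _ ≤ log⁺ ((maxAbv abv (Sum.elim a b) : ℝ) ^ (2 * d)) :=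
        posLog_le_posLog (abv.nonneg _) hdet
    _ = _ := by rw [posLog_pow]; push_cast; ring

end Sylvester

namespace NFPlace

variable {K : Type} [Field K] [NumberField K]

noncomputable def abv : NFPlace K → AbsoluteValue K ℝ
  | .inl w => w.1
  | .inr v => NumberField.HeightOneSpectrum.adicAbv K v

theorem placeAbs_eq_abv (v : NFPlace K) : placeAbs K v = v.abv := by
  funext x
  rcases v with w | v
  · rfl
  · rcases eq_or_ne x 0 with rfl | hx
    · simp [placeAbs, abv]
    · rw [placeAbs, dif_neg hx, abv, NumberField.HeightOneSpectrum.adicAbv_def,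
        WithZeroMulInt.toNNReal_neg_apply]
      push_cast
      rfl

theorem isNonarchimedean_abv_inr (v : HeightOneSpectrum (𝓞 K)) :
    IsNonarchimedean (abv (.inr v : NFPlace K)) :=
  NumberField.HeightOneSpectrum.isNonarchimedean_adicAbv K v

theorem finite_setOf_one_lt_abv_inr (x : K) :
    {v : HeightOneSpectrum (𝓞 K) | 1 < abv (.inr v : NFPlace K) x}.Finite := by
  rcases eq_or_ne x 0 with rfl | hx
  · norm_num [map_zero]
  refine ((NumberField.FinitePlace.hasFiniteMulSupport hx).preimage
    (NumberField.FinitePlace.equivHeightOneSpectrum.symm.injective.injOn)).subset fun v hv => ?_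
  simp only [Set.mem_preimage, Function.mem_mulSupport,
    NumberField.FinitePlace.equivHeightOneSpectrum_symm_apply,
    NumberField.FinitePlace.norm_embedding]
  exact hv.ne'

theorem placeWeight_nonneg (v : NFPlace K) : 0 ≤ placeWeight K v := by
  rcases v with w | v <;> simp only [placeWeight] <;> positivity

theorem sum_placeWeight_inl : ∑ w : InfinitePlace K, placeWeight K (.inl w) = 1 := by
  have hn : (Module.finrank ℚ K : ℝ) ≠ 0 := mod_cast Module.finrank_pos.ne'
  simp only [placeWeight]
  rw [← sum_div, div_eq_one_iff_eq hn]
  exact_mod_cast InfinitePlace.sum_mult_eq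

end NFPlace

section WeilHeight

variable {K : Type} [Field K] [NumberField K]

noncomputable def weilHeight {ι : Type*} [Fintype ι] (c : ι → K) : ℝ :=
  ∑ᶠ v : NFPlace K, placeWeight K v * log (maxAbv v.abv c)

theorem RatMap.height_eq_weilHeight {d : ℕ} (φ : RatMap K d) :
    φ.height = weilHeight (Sum.elim φ.a φ.b) := by
  simp only [RatMap.height, weilHeight, maxAbv, NFPlace.placeAbs_eq_abv]

theorem hasFiniteSupport_placeWeight_mul_log_maxAbv {ι : Type*} [Fintype ι] {c : ι → K}
    (h1 : ∃ i, c i = 1) :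
    (fun v : NFPlace K => placeWeight K v * log (maxAbv v.abv c)).HasFiniteSupport := by
  refine ((Set.finite_range Sum.inl).union ((Set.finite_iUnion fun i =>
    NFPlace.finite_setOf_one_lt_abv_inr (c i)).image Sum.inr)).subset ?_
  rintro (w | v) hv
  · exact .inl ⟨w, rfl⟩
  refine .inr ⟨v, ?_, rfl⟩
  simp only [Set.mem_iUnion, Set.mem_ofPred_eq]
  by_contra! hle
  have hM : (maxAbv (NFPlace.abv (.inr v : NFPlace K)) c : ℝ) = 1 :=
    le_antisymm ((maxAbv_le_iff zero_le_one).mpr hle) (one_le_maxAbv _ h1)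
  exact hv (by simp [hM])

theorem weilHeight_nonneg {ι : Type*} [Fintype ι] {c : ι → K} (h1 : ∃ i, c i = 1) :
    0 ≤ weilHeight c :=
  finsum_nonneg fun v =>
    mul_nonneg (NFPlace.placeWeight_nonneg v) (log_nonneg (one_le_maxAbv _ h1))

open scoped Nat

variable {d : ℕ}

theorem placeWeight_mul_posLog_abv_resultantForms_le {a b : Fin (d+1) → K}
    (h1 : ∃ k, Sum.elim a b k = 1) (v : NFPlace K) :
    placeWeight K v * log⁺ (v.abv (resultantForms a b)) ≤
      2 * d * (placeWeight K v * log (maxAbv v.abv (Sum.elim a b))) +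
        Sum.elim (fun w => placeWeight K (.inl w) * log (2 * d)!) 0 v := by
  have hM : log (maxAbv v.abv (Sum.elim a b)) = log⁺ (maxAbv v.abv (Sum.elim a b)) :=
    (posLog_eq_log (by simpa using one_le_maxAbv v.abv h1)).symm
  rw [hM]
  have hw := NFPlace.placeWeight_nonneg v
  rcases v with w | v
  · calc _ ≤ placeWeight K (.inl w) *
          (2 * d * log⁺ (maxAbv (NFPlace.abv (.inl w)) (Sum.elim a b)) + log (2 * d)!) :=
          mul_le_mul_of_nonneg_left (posLog_abv_resultantForms_le _ a b) hw
      _ = _ := by simp only [Sum.elim_inl]; ring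
  · calc _ ≤ placeWeight K (.inr v) *
          (2 * d * log⁺ (maxAbv (NFPlace.abv (.inr v)) (Sum.elim a b))) :=
          mul_le_mul_of_nonneg_left (posLog_abv_resultantForms_le_of_isNonarchimedean
            (NFPlace.isNonarchimedean_abv_inr v) a b) hw
      _ = _ := by simp only [Sum.elim_inr, Pi.zero_apply]; ring

theorem heightK_resultantForms_le {a b : Fin (d+1) → K} (h1 : ∃ k, Sum.elim a b k = 1) :
    heightK K (resultantForms a b) ≤ 2 * d * weilHeight (Sum.elim a b) + log (2 * d)! := by
  set arch : NFPlace K → ℝ := Sum.elim (fun w => placeWeight K (.inl w) * log (2 * d)!) 0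
  have hfin := hasFiniteSupport_placeWeight_mul_log_maxAbv h1
  have harch : arch.HasFiniteSupport := (Set.finite_range Sum.inl).subset <| by
    rintro (w | v) hv
    exacts [⟨w, rfl⟩, absurd rfl hv]
  have hfin' := Function.HasFiniteSupport.fun_mul_right (fun _ => (2 * d : ℝ)) hfin
  calc heightK K (resultantForms a b)
      = ∑ᶠ v : NFPlace K, placeWeight K v * log⁺ (v.abv (resultantForms a b)) := by
        simp only [heightK, NFPlace.placeAbs_eq_abv]; rfl
    _ ≤ ∑ᶠ v : NFPlace K,
          (2 * d * (placeWeight K v * log (maxAbv v.abv (Sum.elim a b))) + arch v) :=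
        finsum_le_finsum_of_nonneg
          (fun v => mul_nonneg (NFPlace.placeWeight_nonneg v) posLog_nonneg)
          (placeWeight_mul_posLog_abv_resultantForms_le h1) (hfin'.add harch)
    _ = 2 * d * weilHeight (Sum.elim a b) + log (2 * d)! := by
        rw [finsum_add_distrib hfin' harch, ← mul_finsum, finsum_sumElim_zero, ← sum_mul,
          NFPlace.sum_placeWeight_inl, one_mul]
        rfl

end WeilHeight

/-- **Lemma: height bound for the resultant.**
If `f₀, f₁` is a homogeneous presentation of a degree-`d ≥ 2` rational map `φ` over a number
field `K` in which at least one coefficient equals `1`, then the resultant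
`D = Res(f₀, f₁)` satisfies `h(D) ≤ (2d+2)·h(φ) + C·d·log d` for an absolute constant `C > 0`. -/
theorem height_resultant_le :
    ∃ C : ℝ, 0 < C ∧
      ∀ (K : Type) [Field K] [NumberField K] (d : ℕ), 2 ≤ d → ∀ (φ : RatMap K d),
        (∃ i : Fin (d+1), φ.a i = 1 ∨ φ.b i = 1) →
        heightK K (resultantForms φ.a φ.b) ≤
          (2 * (d : ℝ) + 2) * φ.height + C * (d : ℝ) * Real.log d := by
  refine ⟨4, by norm_num, fun K _ _ d hd φ hφ => ?_⟩
  have h1 : ∃ k, Sum.elim φ.a φ.b k = 1 := by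
    obtain ⟨i, hi | hi⟩ := hφ
    exacts [⟨.inl i, hi⟩, ⟨.inr i, hi⟩]
  rw [φ.height_eq_weilHeight]
  linarith [heightK_resultantForms_le h1, log_factorial_two_mul_le hd, weilHeight_nonneg h1]
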